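/- For every λ ∈ (0,1) there exists ε > 0 such that for all capital levels v ∈ (0, ε], the constant β in the representation X*(v) = β + (I(c(φ ∨ y)) − I(cy)) ∧ (K − β) of the unique solution of the Neyman–Pearson problem for ρ_λ at level v equals 0 (equivalently, the essential infimum of X*(v) is 0). -/

import Mathlib

open MeasureTheory Filter Topology Set

/-- The probability space `(Ω, 𝓕, P)` is atomless. -/
def Atomless {Ω : Type*} [MeasurableSpace Ω] (P : Measure Ω) : Prop :=
  ∀ A : Set Ω, MeasurableSet A → 0 < P A →
    ∃ B : Set Ω, MeasurableSet B ∧ B ⊆ A ∧ 0 < P B ∧ P B < P A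

/-- Feasibility for the Neyman–Pearson problem at level `v`:
`X ∈ L^∞`, `0 ≤ X ≤ K` P-a.s. and `E[φX] ≥ v`. -/
def Feasible {Ω : Type*} [MeasurableSpace Ω] (P : Measure Ω) (φ : Ω → ℝ) (K v : ℝ)
    (X : Ω → ℝ) : Prop :=
  MemLp X ⊤ P ∧ (∀ᵐ ω ∂P, 0 ≤ X ω ∧ X ω ≤ K) ∧ v ≤ ∫ ω, φ ω * X ω ∂P

/-- `ρ_λ(−X) = max_{Q ∈ 𝒬_λ} E_Q[ℓ(X)]`, where `𝒬_λ` is the set of probability measures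
`Q ≪ P` with `dQ/dP ≤ 1/λ` P-a.s.  (The value `rhoLam P λ ℓ X` represents `ρ_λ(−X)`.) -/
noncomputable def rhoLam {Ω : Type*} [MeasurableSpace Ω] (P : Measure Ω) (lam : ℝ)
    (ℓ : ℝ → ℝ) (X : Ω → ℝ) : ℝ :=
  sSup {r : ℝ | ∃ Q : Measure Ω, IsProbabilityMeasure Q ∧ Q ≪ P ∧
    (∀ᵐ ω ∂P, Q.rnDeriv P ω ≤ ENNReal.ofReal (1 / lam)) ∧ r = ∫ ω, ℓ (X ω) ∂Q}

/-- A solution of the Neyman–Pearson problem for `ρ_λ` at level `v`: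
minimize `ρ_λ(−X)` over `X ∈ L^∞` with `0 ≤ X ≤ K` P-a.s. and `E[φX] ≥ v`. -/
def IsLamSolution {Ω : Type*} [MeasurableSpace Ω] (P : Measure Ω) (lam : ℝ) (ℓ : ℝ → ℝ)
    (φ : Ω → ℝ) (K v : ℝ) (X : Ω → ℝ) : Prop :=
  Feasible P φ K v X ∧
    ∀ Y : Ω → ℝ, Feasible P φ K v Y → rhoLam P lam ℓ X ≤ rhoLam P lam ℓ Y

/-- The characterizing properties of the extension `I : ℝ → [−∞,∞]` of the inverse of `ℓ′`:
`I = (ℓ′)⁻¹` on the range `(a,b)` of `ℓ′`, `I = +∞` above `b` and `I = −∞` below `a`. -/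
def IsExtendedInverse (ℓ : ℝ → ℝ) (I : ℝ → EReal) : Prop :=
  (∀ x : ℝ, I (deriv ℓ x) = (x : EReal)) ∧
  (∀ z : ℝ, (∀ x : ℝ, deriv ℓ x < z) → I z = ⊤) ∧
  (∀ z : ℝ, (∀ x : ℝ, z < deriv ℓ x) → I z = ⊥)

/-- The representation `X* = β + (I(c(φ ∨ y)) − I(cy)) ∧ (K − β)` P-a.s.,
with `β ≥ 0`, `y ≥ q` and `c = ℓ′(β)/y`. -/
def LamForm {Ω : Type*} [MeasurableSpace Ω] (P : Measure Ω) (φ : Ω → ℝ) (ℓ : ℝ → ℝ)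
    (I : ℝ → EReal) (K q : ℝ) (X : Ω → ℝ) (β y c : ℝ) : Prop :=
  0 ≤ β ∧ q ≤ y ∧ c = deriv ℓ β / y ∧
    ∀ᵐ ω ∂P, X ω =
      β + (min (I (c * max (φ ω) y) - I (c * y)) (((K - β : ℝ) : EReal))).toReal


/-!
Suppose `β > 0`. Then `X* ≥ β ∧ K > 0`, so unless the budget binds, `X*` minus a small constant
is feasible and strictly cheaper; hence `E[φX*] = v`. The representation makes `X*` flat at level
`β ∧ K` on `{φ ≤ y}` and equal to `K` on `{φ ≥ y ℓ′(K)/ℓ′(β)}`. If `β ≥ K`, or `y` is below a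
threshold depending only on `ℓ`, `K` and `λ`, then `X* ≥ K` on a fixed set `{φ > U}`, which costs
the capital `K U P(φ > U) > 0`. Otherwise shifting capital from `{φ ≤ y/2}` up to
`{y/2 < φ ≤ y}` keeps the budget and lowers the loss uniformly over `𝒬_λ`: since `dQ/dP ≤ 1/λ`,
every `Q` charges `{φ > y/2}` with at most `2/(λy)` (Markov) and the receiving set with at most
`1/λ` times its `P`-mass.
-/

section Loss

variable {ℓ : ℝ → ℝ}

theorem ConvexOn.deriv_mul_sub_le_sub (hℓ : ConvexOn ℝ univ ℓ) (hd : Differentiable ℝ ℓ)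
    {s a b : ℝ} (hsa : s ≤ a) (hab : a ≤ b) : deriv ℓ s * (b - a) ≤ ℓ b - ℓ a := by
  rcases hab.eq_or_lt with rfl | hab
  · simp
  calc deriv ℓ s * (b - a) ≤ slope ℓ a b * (b - a) := by
        gcongr
        exact (hℓ.monotoneOn_deriv (fun x _ => hd x) trivial trivial hsa).trans
          (hℓ.deriv_le_slope trivial trivial hab (hd a))
    _ = ℓ b - ℓ a := by rw [slope_def_field]; field_simp [sub_ne_zero.mpr hab.ne']

theorem ConvexOn.sub_le_deriv_mul_sub (hℓ : ConvexOn ℝ univ ℓ) (hd : Differentiable ℝ ℓ)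
    {a b t : ℝ} (hab : a ≤ b) (hbt : b ≤ t) : ℓ b - ℓ a ≤ deriv ℓ t * (b - a) := by
  rcases hab.eq_or_lt with rfl | hab
  · simp
  calc ℓ b - ℓ a = slope ℓ a b * (b - a) := by
        rw [slope_def_field]; field_simp [sub_ne_zero.mpr hab.ne']
    _ ≤ deriv ℓ t * (b - a) := by
        gcongr
        exact (hℓ.slope_le_deriv trivial trivial hab (hd b)).trans
          (hℓ.monotoneOn_deriv (fun x _ => hd x) trivial trivial hbt)

variable {I : ℝ → EReal}

theorem IsExtendedInverse.le_apply (hI : IsExtendedInverse ℓ I) (hm : StrictMono (deriv ℓ))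
    (hc : Continuous (deriv ℓ)) {t z : ℝ} (h : deriv ℓ t ≤ z) : (t : EReal) ≤ I z := by
  by_cases hz : z ∈ range (deriv ℓ)
  · obtain ⟨x, rfl⟩ := hz
    rw [hI.1 x, EReal.coe_le_coe_iff]
    exact hm.le_iff_le.mp h
  · have hlt : ∀ x, deriv ℓ x < z := fun x => not_le.mp fun hx =>
      hz ((isPreconnected_range hc).Icc_subset (mem_range_self t) (mem_range_self x) ⟨h, hx⟩)
    rw [hI.2.1 z hlt]
    exact le_top

end Loss

theorem add_toReal_min_sub_eq_toReal_min {β : ℝ} (K : ℝ) {W : EReal} (hW : (β : EReal) ≤ W) :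
    β + (min (W - β) ((K - β : ℝ) : EReal)).toReal = (min W K).toReal := by
  induction W using EReal.rec with
  | bot => exact absurd (le_bot_iff.mp hW) (EReal.coe_ne_bot β)
  | coe w =>
    rw [← EReal.coe_sub, ← EReal.coe_strictMono.monotone.map_min,
      ← EReal.coe_strictMono.monotone.map_min, EReal.toReal_coe, EReal.toReal_coe,
      min_sub_sub_right]
    ring
  | top =>
    rw [EReal.top_sub_coe, min_eq_right le_top, min_eq_right le_top, EReal.toReal_coe,
      EReal.toReal_coe]
    ring

theorem LamForm.ae_bounds {Ω : Type*} [MeasurableSpace Ω] {P : Measure Ω} {φ X : Ω → ℝ}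
    {ℓ : ℝ → ℝ} {I : ℝ → EReal} {K q β y c : ℝ} (hI : IsExtendedInverse ℓ I)
    (hm : StrictMono (deriv ℓ)) (hc : Continuous (deriv ℓ)) (hℓ' : ∀ x, 0 < deriv ℓ x)
    (hq : 0 < q) (h : LamForm P φ ℓ I K q X β y c) :
    ∀ᵐ ω ∂P, min β K ≤ X ω ∧ (φ ω ≤ y → X ω = min β K) ∧
      (y * deriv ℓ K / deriv ℓ β ≤ φ ω → X ω = K) := by
  obtain ⟨-, hqy, rfl, hX⟩ := h
  have hy : 0 < y := hq.trans_le hqy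
  have hβ := hℓ' β
  have hcy : deriv ℓ β / y * y = deriv ℓ β := by field_simp
  have hmin (a : ℝ) : min (a : EReal) K = (min a K : ℝ) :=
    (EReal.coe_strictMono.monotone.map_min).symm
  filter_upwards [hX] with ω hω
  set W := I (deriv ℓ β / y * max (φ ω) y)
  have hβW : (β : EReal) ≤ W := hI.le_apply hm hc <| by
    calc deriv ℓ β = deriv ℓ β / y * y := hcy.symm
      _ ≤ deriv ℓ β / y * max (φ ω) y := by gcongr; exact le_max_right _ _
  rw [hcy, hI.1 β, add_toReal_min_sub_eq_toReal_min K hβW] at hω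
  refine ⟨?_, fun hφ => ?_, fun hφ => ?_⟩
  · rw [hω, ← EReal.toReal_coe (min β K), ← hmin]
    exact EReal.toReal_le_toReal (min_le_min_right (K : EReal) hβW)
      (hmin β ▸ EReal.coe_ne_bot _) ((min_le_right W K).trans_lt (EReal.coe_lt_top K)).ne
  · have hWβ : W = β := by simp only [W, max_eq_right hφ, hcy, hI.1 β]
    rw [hω, hWβ, hmin, EReal.toReal_coe]
  · have hKW : (K : EReal) ≤ W := hI.le_apply hm hc <| by
      calc deriv ℓ K = deriv ℓ β / y * (y * deriv ℓ K / deriv ℓ β) := by field_simp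
        _ ≤ deriv ℓ β / y * max (φ ω) y := by gcongr; exact hφ.trans (le_max_left _ _)
    rw [hω, min_eq_right hKW, EReal.toReal_coe]

theorem LamForm.ae_eq_of_lt {Ω : Type*} [MeasurableSpace Ω] {P : Measure Ω} {φ X : Ω → ℝ}
    {ℓ : ℝ → ℝ} {I : ℝ → EReal} {K q β y c : ℝ} (hI : IsExtendedInverse ℓ I)
    (hm : StrictMono (deriv ℓ)) (hc : Continuous (deriv ℓ)) (hℓ' : ∀ x, 0 < deriv ℓ x)
    (hq : 0 < q) (h : LamForm P φ ℓ I K q X β y c) {y₀ : ℝ} (hy : y ≤ y₀) :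
    ∀ᵐ ω ∂P, y₀ * deriv ℓ K / deriv ℓ 0 < φ ω → X ω = K := by
  have hℓK := hℓ' K
  have hℓ0 := hℓ' 0
  have hy₀ : 0 ≤ y₀ := by linarith [hq.trans_le h.2.1]
  refine (h.ae_bounds hI hm hc hℓ' hq).mono fun ω hω hφ => hω.2.2 (le_trans ?_ hφ.le)
  gcongr
  exact hm.monotone h.1

section Rho

variable {Ω : Type*} [MeasurableSpace Ω] {P Q : Measure Ω} {lam : ℝ} {ℓ : ℝ → ℝ}

def qLam (P : Measure Ω) (lam : ℝ) : Set (Measure Ω) :=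
  {Q | IsProbabilityMeasure Q ∧ Q ≪ P ∧ ∀ᵐ ω ∂P, Q.rnDeriv P ω ≤ ENNReal.ofReal (1 / lam)}

theorem rhoLam_eq_sSup_image (X : Ω → ℝ) :
    rhoLam P lam ℓ X = sSup ((fun Q => ∫ ω, ℓ (X ω) ∂Q) '' qLam P lam) := by
  simp only [rhoLam, qLam, image, mem_ofPred_eq, and_assoc, eq_comm]

theorem self_mem_qLam [IsProbabilityMeasure P] (h0 : 0 < lam) (h1 : lam ≤ 1) :
    P ∈ qLam P lam := by
  refine ⟨inferInstance, .rfl, ?_⟩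
  filter_upwards [Measure.rnDeriv_self P] with ω hω
  rw [hω, ← ENNReal.ofReal_one]
  exact ENNReal.ofReal_le_ofReal (one_le_one_div h0 h1)

theorem measure_le_of_mem_qLam [IsFiniteMeasure P] (hQ : Q ∈ qLam P lam) (A : Set Ω) :
    Q A ≤ ENNReal.ofReal (1 / lam) * P A := by
  have := hQ.1
  calc Q A = ∫⁻ ω in A, Q.rnDeriv P ω ∂P := (Measure.setLIntegral_rnDeriv hQ.2.1 A).symm
    _ ≤ ∫⁻ _ in A, ENNReal.ofReal (1 / lam) ∂P := lintegral_mono_ae (ae_restrict_of_ae hQ.2.2)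
    _ = ENNReal.ofReal (1 / lam) * P A := setLIntegral_const A _

theorem measureReal_le_of_mem_qLam [IsFiniteMeasure P] (hQ : Q ∈ qLam P lam) (hlam : 0 < lam)
    (A : Set Ω) : Q.real A ≤ P.real A / lam := by
  have h := ENNReal.toReal_mono (by finiteness) (measure_le_of_mem_qLam hQ A)
  rwa [ENNReal.toReal_mul, ENNReal.toReal_ofReal (by positivity), ← measureReal_def,
    ← measureReal_def, one_div_mul_eq_div] at h

theorem one_sub_le_measureReal_of_mem_qLam [IsFiniteMeasure P] (hQ : Q ∈ qLam P lam)
    (hlam : 0 < lam) {A : Set Ω} (hA : MeasurableSet A) : 1 - P.real Aᶜ / lam ≤ Q.real A := by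
  have := hQ.1
  have h := measureReal_le_of_mem_qLam hQ hlam Aᶜ
  rw [probReal_compl_eq_one_sub hA] at h
  linarith

theorem integrable_comp_of_mem_qLam (hQ : Q ∈ qLam P lam) (hℓc : Continuous ℓ)
    (hℓm : Monotone ℓ) {X : Ω → ℝ} (hX : AEStronglyMeasurable X P) {K : ℝ}
    (hXb : ∀ᵐ ω ∂P, 0 ≤ X ω ∧ X ω ≤ K) : Integrable (fun ω => ℓ (X ω)) Q := by
  have := hQ.1
  refine .of_bound (hℓc.comp_aestronglyMeasurable (hX.mono_ac hQ.2.1)) (max |ℓ 0| |ℓ K|) ?_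
  filter_upwards [hQ.2.1.ae_le hXb] with ω hω
  exact abs_le_max_abs_abs (hℓm hω.1) (hℓm hω.2)

theorem integral_comp_le_rhoLam (hQ : Q ∈ qLam P lam) (hℓc : Continuous ℓ) (hℓm : Monotone ℓ)
    {X : Ω → ℝ} (hX : AEStronglyMeasurable X P) {K : ℝ} (hXb : ∀ᵐ ω ∂P, 0 ≤ X ω ∧ X ω ≤ K) :
    ∫ ω, ℓ (X ω) ∂Q ≤ rhoLam P lam ℓ X := by
  rw [rhoLam_eq_sSup_image]
  refine le_csSup ⟨ℓ K, ?_⟩ (mem_image_of_mem _ hQ)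
  rintro _ ⟨Q', hQ', rfl⟩
  have := hQ'.1
  calc ∫ ω, ℓ (X ω) ∂Q' ≤ ∫ _, ℓ K ∂Q' :=
        integral_mono_ae (integrable_comp_of_mem_qLam hQ' hℓc hℓm hX hXb) (integrable_const _)
          (hQ'.2.1.ae_le (hXb.mono fun _ h => hℓm h.2))
    _ = ℓ K := by simp

theorem rhoLam_le_of_forall [IsProbabilityMeasure P] (h0 : 0 < lam) (h1 : lam ≤ 1)
    {X : Ω → ℝ} {M : ℝ} (h : ∀ Q ∈ qLam P lam, ∫ ω, ℓ (X ω) ∂Q ≤ M) :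
    rhoLam P lam ℓ X ≤ M := by
  rw [rhoLam_eq_sSup_image]
  exact csSup_le ⟨_, mem_image_of_mem _ (self_mem_qLam h0 h1)⟩ (forall_mem_image.2 h)

theorem IsLamSolution.false_of_ae_comp_le_add [IsProbabilityMeasure P] (h0 : 0 < lam)
    (h1 : lam ≤ 1) (hℓc : Continuous ℓ) (hℓm : Monotone ℓ) {φ X Y g : Ω → ℝ} {K v gap : ℝ}
    (hSol : IsLamSolution P lam ℓ φ K v X) (hY : Feasible P φ K v Y)
    (hle : ∀ᵐ ω ∂P, ℓ (Y ω) ≤ ℓ (X ω) + g ω) (hg : ∀ Q ∈ qLam P lam, Integrable g Q)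
    (hgap : 0 < gap) (hg_le : ∀ Q ∈ qLam P lam, ∫ ω, g ω ∂Q ≤ -gap) : False := by
  have hX := hSol.1
  have hY_le : rhoLam P lam ℓ Y ≤ rhoLam P lam ℓ X - gap := by
    refine rhoLam_le_of_forall h0 h1 fun Q hQ => ?_
    calc ∫ ω, ℓ (Y ω) ∂Q ≤ ∫ ω, (ℓ (X ω) + g ω) ∂Q :=
          integral_mono_ae (integrable_comp_of_mem_qLam hQ hℓc hℓm hY.1.1 hY.2.1)
            ((integrable_comp_of_mem_qLam hQ hℓc hℓm hX.1.1 hX.2.1).add (hg Q hQ))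
            (hQ.2.1.ae_le hle)
      _ = ∫ ω, ℓ (X ω) ∂Q + ∫ ω, g ω ∂Q :=
          integral_add (integrable_comp_of_mem_qLam hQ hℓc hℓm hX.1.1 hX.2.1) (hg Q hQ)
      _ ≤ rhoLam P lam ℓ X - gap := by
          linarith [hg_le Q hQ, integral_comp_le_rhoLam hQ hℓc hℓm hX.1.1 hX.2.1]
  linarith [hSol.2 Y hY]

end Rho

section Capital

variable {Ω : Type*} [MeasurableSpace Ω] {P : Measure Ω} {φ X : Ω → ℝ} {K v : ℝ}

theorem Feasible.of_ae_bounds (hX : AEStronglyMeasurable X P)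
    (hb : ∀ᵐ ω ∂P, 0 ≤ X ω ∧ X ω ≤ K) (hv : v ≤ ∫ ω, φ ω * X ω ∂P) : Feasible P φ K v X :=
  ⟨memLp_top_of_bound hX K (hb.mono fun _ h => abs_le.2 ⟨by linarith [h.1, h.2], h.2⟩), hb, hv⟩

theorem Feasible.integrable_mul (hφ : Integrable φ P) (h : Feasible P φ K v X) :
    Integrable (fun ω => φ ω * X ω) P :=
  hφ.mul_of_top_left h.1

theorem mul_setIntegral_le_integral_mul (hφ : 0 ≤ᵐ[P] φ) (hX : ∀ᵐ ω ∂P, 0 ≤ X ω)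
    (hφX : Integrable (fun ω => φ ω * X ω) P) {A : Set Ω} (hφA : IntegrableOn φ A P) {a : ℝ}
    (hA : MeasurableSet A) (hXA : ∀ᵐ ω ∂P, ω ∈ A → a ≤ X ω) :
    a * ∫ ω in A, φ ω ∂P ≤ ∫ ω, φ ω * X ω ∂P := by
  rw [← integral_const_mul]
  calc ∫ ω in A, a * φ ω ∂P ≤ ∫ ω in A, φ ω * X ω ∂P := by
        refine setIntegral_mono_ae_restrict (hφA.const_mul a) hφX.integrableOn ?_
        refine (ae_restrict_iff' hA).2 ?_
        filter_upwards [hφ, hXA] with ω hφω hXω hω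
        rw [mul_comm]
        exact mul_le_mul_of_nonneg_left (hXω hω) hφω
    _ ≤ ∫ ω, φ ω * X ω ∂P :=
        setIntegral_le_integral hφX (by filter_upwards [hφ, hX] with ω h1 h2 using mul_nonneg h1 h2)

theorem measureReal_lt_le_integral_div [IsFiniteMeasure P] (hφ : 0 ≤ᵐ[P] φ)
    (hφi : Integrable φ P) {t : ℝ} (ht : 0 < t) :
    P.real {ω | t < φ ω} ≤ (∫ ω, φ ω ∂P) / t := by
  have hmono : P.real {ω | t < φ ω} ≤ P.real {ω | t ≤ φ ω} :=
    measureReal_mono fun ω (h : t < φ ω) => h.le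
  rw [le_div_iff₀ ht]
  nlinarith [mul_meas_ge_le_integral_of_nonneg hφ hφi t]

theorem mul_mul_measureReal_le_integral_mul [IsFiniteMeasure P] (hφm : Measurable φ)
    (hφ : Integrable φ P) (hφ0 : 0 ≤ᵐ[P] φ) (hX : ∀ᵐ ω ∂P, 0 ≤ X ω)
    (hφX : Integrable (fun ω => φ ω * X ω) P) {a U : ℝ} (ha : 0 ≤ a)
    (hXU : ∀ᵐ ω ∂P, U < φ ω → a ≤ X ω) :
    a * (U * P.real {ω | U < φ ω}) ≤ ∫ ω, φ ω * X ω ∂P := by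
  have hA : MeasurableSet {ω | U < φ ω} := measurableSet_lt measurable_const hφm
  calc a * (U * P.real {ω | U < φ ω}) ≤ a * ∫ ω in {ω | U < φ ω}, φ ω ∂P := by
        gcongr
        exact setIntegral_ge_of_const_le_real hA (measure_ne_top P _)
          (fun ω (hω : U < φ ω) => hω.le) hφ.integrableOn
    _ ≤ ∫ ω, φ ω * X ω ∂P := mul_setIntegral_le_integral_mul hφ0 hX hφX hφ.integrableOn hA hXU

theorem pos_of_measureReal_le_pos (hφ : ∀ᵐ ω ∂P, 0 < φ ω) {q : ℝ}
    (hq : 0 < P.real {ω | φ ω ≤ q}) : 0 < q := by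
  by_contra! hq0
  have hnull : P {ω | φ ω ≤ q} = 0 :=
    measure_mono_null (fun ω (h : φ ω ≤ q) => not_lt.2 (h.trans hq0)) (ae_iff.1 hφ)
  simp [measureReal_def, hnull] at hq

end Capital

section Improvement

variable {Ω : Type*} [MeasurableSpace Ω] {P : Measure Ω} [IsProbabilityMeasure P] {lam : ℝ}
  {ℓ : ℝ → ℝ} {φ X : Ω → ℝ} {K v : ℝ}

/-- Lowering `X` by a small constant beats `X` unless the budget constraint binds. -/
theorem IsLamSolution.integral_mul_eq (h0 : 0 < lam) (h1 : lam ≤ 1)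
    (hℓ : ConvexOn ℝ univ ℓ) (hℓd : Differentiable ℝ ℓ) (hℓm : Monotone ℓ)
    (hℓ0 : 0 < deriv ℓ 0) (hφ : Integrable φ P) (hφ1 : ∫ ω, φ ω ∂P = 1)
    (hSol : IsLamSolution P lam ℓ φ K v X) {m : ℝ} (hm : 0 < m) (hXm : ∀ᵐ ω ∂P, m ≤ X ω) :
    ∫ ω, φ ω * X ω ∂P = v := by
  refine le_antisymm ?_ hSol.1.2.2
  by_contra! hσ
  set d := min m (∫ ω, φ ω * X ω ∂P - v)
  have hdm : d ≤ m := min_le_left _ _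
  have hd : 0 < d := lt_min hm (sub_pos.2 hσ)
  have hY : Feasible P φ K v (fun ω => X ω - d) := by
    refine .of_ae_bounds (hSol.1.1.1.sub aestronglyMeasurable_const) ?_ ?_
    · filter_upwards [hSol.1.2.1, hXm] with ω hb hmω
      constructor <;> linarith [hb.2]
    · have hexp : (fun ω => φ ω * (X ω - d)) = fun ω => φ ω * X ω - d * φ ω := by
        ext; ring
      rw [hexp, integral_sub (hSol.1.integrable_mul hφ) (hφ.const_mul d), integral_const_mul,
        hφ1]
      linarith [min_le_right m (∫ ω, φ ω * X ω ∂P - v)]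
  refine hSol.false_of_ae_comp_le_add h0 h1 hℓd.continuous hℓm hY (g := fun _ => -(d * deriv ℓ 0))
    ?_ (fun Q hQ => have := hQ.1; integrable_const _) (mul_pos hd hℓ0) fun Q hQ => ?_
  · filter_upwards [hXm] with ω hmω
    have := hℓ.deriv_mul_sub_le_sub hℓd (by linarith : 0 ≤ X ω - d) (sub_le_self _ hd.le)
    rw [sub_sub_cancel] at this
    linarith
  · have := hQ.1
    simp

/-- Moving capital from `G` to `S`, where `X` is flat at level `β`: under `Q ∈ 𝒬_λ` the loss
saved on `G` is at least `δ ℓ'(0) Q(G) ≥ δ ℓ'(0) (1 - P(Gᶜ)/λ)`, the loss added on `S` at most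
`η ℓ'(K) Q(S) ≤ η ℓ'(K) P(S)/λ`. -/
theorem IsLamSolution.false_of_transfer (h0 : 0 < lam) (h1 : lam ≤ 1)
    (hℓ : ConvexOn ℝ univ ℓ) (hℓd : Differentiable ℝ ℓ) (hℓm : Monotone ℓ)
    (hφ : Integrable φ P) (hSol : IsLamSolution P lam ℓ φ K v X) {G S : Set Ω}
    (hG : MeasurableSet G) (hS : MeasurableSet S) (hGS : Disjoint G S) {β δ η : ℝ}
    (hX : ∀ᵐ ω ∂P, ω ∈ G ∪ S → X ω = β) (hδ : 0 < δ) (hδβ : δ ≤ β) (hη : 0 ≤ η)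
    (hηK : β + η ≤ K) (hcap : δ * ∫ ω in G, φ ω ∂P ≤ η * ∫ ω in S, φ ω ∂P)
    (hgain : η * deriv ℓ K * (P.real S / lam) < δ * deriv ℓ 0 * (1 - P.real Gᶜ / lam)) :
    False := by
  set Y : Ω → ℝ := fun ω => X ω + (S.indicator (fun _ => η) ω - G.indicator (fun _ => δ) ω)
  set g : Ω → ℝ := fun ω =>
    S.indicator (fun _ => η * deriv ℓ K) ω - G.indicator (fun _ => δ * deriv ℓ 0) ω
  have hY : ∀ᵐ ω ∂P, (0 ≤ Y ω ∧ Y ω ≤ K) ∧ ℓ (Y ω) ≤ ℓ (X ω) + g ω := by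
    filter_upwards [hX, hSol.1.2.1] with ω hXω hb
    by_cases hωG : ω ∈ G
    · have hωS : ω ∉ S := hGS.notMem_of_mem_left hωG
      have hYω : Y ω = β - δ := by
        simp only [Y, indicator_of_mem hωG, indicator_of_notMem hωS, hXω (.inl hωG)]; ring
      have hgω : g ω = -(δ * deriv ℓ 0) := by
        simp only [g, indicator_of_mem hωG, indicator_of_notMem hωS]; ring
      have hl := hℓ.deriv_mul_sub_le_sub hℓd (by linarith : 0 ≤ β - δ) (sub_le_self β hδ.le)
      rw [sub_sub_cancel] at hl
      rw [hYω, hgω, hXω (.inl hωG)]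
      exact ⟨⟨by linarith, by linarith⟩, by linarith⟩
    by_cases hωS : ω ∈ S
    · have hYω : Y ω = β + η := by
        simp only [Y, indicator_of_mem hωS, indicator_of_notMem hωG, hXω (.inr hωS)]; ring
      have hgω : g ω = η * deriv ℓ K := by
        simp only [g, indicator_of_mem hωS, indicator_of_notMem hωG]; ring
      have hl := hℓ.sub_le_deriv_mul_sub hℓd (le_add_of_nonneg_right hη) hηK
      rw [add_sub_cancel_left] at hl
      rw [hYω, hgω, hXω (.inr hωS)]
      exact ⟨⟨by linarith, hηK⟩, by linarith⟩
    · simp only [Y, g, indicator_of_notMem hωS, indicator_of_notMem hωG]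
      exact ⟨by simpa using hb, by simp⟩
  have hYfeas : Feasible P φ K v Y := by
    refine .of_ae_bounds (hSol.1.1.1.add (by fun_prop (disch := assumption)))
      (hY.mono fun _ h => h.1) ?_
    have hexp : (fun ω => φ ω * Y ω) =
        fun ω => φ ω * X ω + (η * S.indicator φ ω - δ * G.indicator φ ω) := by
      ext ω
      by_cases hωS : ω ∈ S <;> by_cases hωG : ω ∈ G <;> simp [Y, hωS, hωG] <;> ring
    have hφS : Integrable (fun ω => η * S.indicator φ ω) P := (hφ.indicator hS).const_mul η
    have hφG : Integrable (fun ω => δ * G.indicator φ ω) P := (hφ.indicator hG).const_mul δ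
    rw [hexp, integral_add (g := fun ω => η * S.indicator φ ω - δ * G.indicator φ ω)
      (hSol.1.integrable_mul hφ) (hφS.sub hφG),
      integral_sub hφS hφG,
      integral_const_mul, integral_const_mul, integral_indicator hS, integral_indicator hG]
    linarith [hSol.1.2.2]
  have hgQ (Q : Measure Ω) (hQ : Q ∈ qLam P lam) : Integrable g Q := by
    have := hQ.1
    exact ((integrable_const _).indicator hS).sub ((integrable_const _).indicator hG)
  refine hSol.false_of_ae_comp_le_add h0 h1 hℓd.continuous hℓm hYfeas (hY.mono fun _ h => h.2)
    hgQ (sub_pos.2 hgain) fun Q hQ => ?_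
  have := hQ.1
  rw [integral_sub ((integrable_const _).indicator hS) ((integrable_const _).indicator hG),
    integral_indicator_const _ hS, integral_indicator_const _ hG, smul_eq_mul, smul_eq_mul]
  have hQS : η * deriv ℓ K * Q.real S ≤ η * deriv ℓ K * (P.real S / lam) := by
    have := hℓm.deriv_nonneg (x := K)
    gcongr
    exact measureReal_le_of_mem_qLam hQ h0 S
  have hQG : δ * deriv ℓ 0 * (1 - P.real Gᶜ / lam) ≤ δ * deriv ℓ 0 * Q.real G := by
    have := hℓm.deriv_nonneg (x := 0)
    gcongr
    exact one_sub_le_measureReal_of_mem_qLam hQ h0 hG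
  linarith

end Improvement

theorem exists_transfer_amounts {β K mG mS : ℝ} (hβ : 0 < β) (hβK : β < K) (hmG0 : 0 ≤ mG)
    (hmG1 : mG ≤ 1) (hmS : 0 < mS) :
    ∃ δ η : ℝ, 0 < δ ∧ δ ≤ β ∧ 0 ≤ η ∧ β + η ≤ K ∧ η * mS = δ * mG := by
  set δ := min β ((K - β) * mS)
  have hδ : 0 < δ := lt_min hβ (mul_pos (sub_pos.2 hβK) hmS)
  refine ⟨δ, δ * mG / mS, hδ, min_le_left _ _, by positivity, ?_, div_mul_cancel₀ _ hmS.ne'⟩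
  have : δ * mG / mS ≤ K - β := by
    rw [div_le_iff₀ hmS]
    exact (mul_le_of_le_one_right hδ.le hmG1).trans (min_le_right _ _)
  linarith

/-- The transfer from `{φ ≤ t}` to `{t < φ ≤ y}` pays off for large `t` because
`P(φ > t) ≤ 1/t` (Markov). -/
theorem IsLamSolution.false_of_flat_floor {Ω : Type*} [MeasurableSpace Ω] {P : Measure Ω}
    [IsProbabilityMeasure P] {lam : ℝ} {ℓ : ℝ → ℝ} {φ X : Ω → ℝ} {K v : ℝ}
    (h0 : 0 < lam) (h1 : lam ≤ 1) (hℓ : ConvexOn ℝ univ ℓ) (hℓd : Differentiable ℝ ℓ)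
    (hℓm : Monotone ℓ) (hφm : Measurable φ) (hφ : Integrable φ P)
    (hφ0 : 0 ≤ᵐ[P] φ) (hφ1 : ∫ ω, φ ω ∂P = 1)
    (hF : StrictMonoOn (fun x : ℝ => (P {ω | φ ω ≤ x}).toReal) (Ioi 0))
    (hSol : IsLamSolution P lam ℓ φ K v X) {β t y : ℝ} (hβ : 0 < β) (hβK : β < K)
    (ht0 : 0 < t) (ht : deriv ℓ 0 + deriv ℓ K < t * (lam * deriv ℓ 0)) (hty : t < y)
    (hX : ∀ᵐ ω ∂P, φ ω ≤ y → X ω = β) : False := by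
  set G := {ω | φ ω ≤ t}
  set S := {ω | φ ω ≤ y} \ G
  have hGy : G ⊆ {ω | φ ω ≤ y} := fun ω (h : φ ω ≤ t) => h.trans hty.le
  have hG : MeasurableSet G := measurableSet_le hφm measurable_const
  have hS : MeasurableSet S := (measurableSet_le hφm measurable_const).diff hG
  have hPS : 0 < P.real S := by
    rw [measureReal_sdiff hGy hG, sub_pos]
    exact hF ht0 (ht0.trans hty) hty
  have hmS : t * P.real S ≤ ∫ ω in S, φ ω ∂P := setIntegral_ge_of_const_le_real hS
    (measure_ne_top P S) (fun ω hω => (not_le.1 hω.2).le) hφ.integrableOn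
  have hmG0 : 0 ≤ ∫ ω in G, φ ω ∂P := integral_nonneg_of_ae (ae_restrict_of_ae hφ0)
  have hmG1 : ∫ ω in G, φ ω ∂P ≤ 1 := hφ1 ▸ setIntegral_le_integral hφ hφ0
  obtain ⟨δ, η, hδ, hδβ, hη, hηK, hcap⟩ :=
    exists_transfer_amounts hβ hβK hmG0 hmG1 (lt_of_lt_of_le (by positivity) hmS)
  have hηS : η * P.real S ≤ δ / t := by
    rw [le_div_iff₀' ht0]
    calc t * (η * P.real S) = η * (t * P.real S) := by ring
      _ ≤ η * ∫ ω in S, φ ω ∂P := by gcongr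
      _ ≤ δ := hcap ▸ mul_le_of_le_one_right hδ.le hmG1
  have hGc : P.real Gᶜ ≤ 1 / t := by
    simpa only [G, compl_ofPred, not_le, hφ1] using measureReal_lt_le_integral_div hφ0 hφ ht0
  have hℓK := hℓm.deriv_nonneg (x := K)
  refine hSol.false_of_transfer h0 h1 hℓ hℓd hℓm hφ hG hS disjoint_sdiff_right
    (by rwa [union_sdiff_cancel hGy]) hδ hδβ hη hηK hcap.ge ?_
  calc η * deriv ℓ K * (P.real S / lam) = deriv ℓ K * (η * P.real S) / lam := by ring
    _ ≤ deriv ℓ K * (δ / t) / lam := by gcongr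
    _ < δ * deriv ℓ 0 * (1 - 1 / t / lam) := by
        rw [← sub_pos]
        field_simp
        nlinarith
    _ ≤ δ * deriv ℓ 0 * (1 - P.real Gᶜ / lam) := by
        have := hℓm.deriv_nonneg (x := 0)
        gcongr

theorem rhoLam_beta_zero_for_small_levels_general
    {Ω : Type*} [MeasurableSpace Ω] (P : Measure Ω) [IsProbabilityMeasure P]
    (φ : Ω → ℝ) (hφm : Measurable φ) (hφint : Integrable φ P)
    (hφpos : ∀ᵐ ω ∂P, 0 < φ ω) (hφ1 : ∫ ω, φ ω ∂P = 1)
    (hφunb : ∀ M : ℝ, 0 < P {ω | M < φ ω})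
    (hFmono : StrictMonoOn (fun x : ℝ => (P {ω | φ ω ≤ x}).toReal) (Ioi 0))
    (K : ℝ) (hK : 0 < K) (lam : ℝ) (hlam : lam ∈ Ioo (0:ℝ) 1)
    (ℓ : ℝ → ℝ) (hℓconv : StrictConvexOn ℝ univ ℓ) (hℓmono : StrictMono ℓ)
    (hℓC1 : ContDiff ℝ 1 ℓ) (hℓ'pos : ∀ x : ℝ, 0 < deriv ℓ x)
    (I : ℝ → EReal) (hI : IsExtendedInverse ℓ I)
    (q : ℝ) (hq : (P {ω | φ ω < q}).toReal ≤ 1 - lam ∧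
      1 - lam ≤ (P {ω | φ ω ≤ q}).toReal) :
    ∃ ε : ℝ, 0 < ε ∧ ∀ v : ℝ, 0 < v → v ≤ ε →
      ∀ X : Ω → ℝ, ∀ β y c : ℝ,
        IsLamSolution P lam ℓ φ K v X → LamForm P φ ℓ I K q X β y c → β = 0 := by
  have hℓc := hℓconv.convexOn
  have hℓd : Differentiable ℝ ℓ := hℓC1.differentiable one_ne_zero
  have hsm := strictMonoOn_univ.1 (hℓconv.strictMonoOn_deriv fun x _ => hℓd x)
  have hc := hℓC1.continuous_deriv le_rfl
  have hφ0 : 0 ≤ᵐ[P] φ := hφpos.mono fun _ h => h.le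
  have hq0 : 0 < q := pos_of_measureReal_le_pos hφpos ((sub_pos.2 hlam.2).trans_le hq.2)
  have hlam0 := hlam.1
  have hℓ0 := hℓ'pos 0
  have hℓK := hℓ'pos K
  set t₀ := (deriv ℓ 0 + deriv ℓ K) / (lam * deriv ℓ 0)
  have ht₀ : 0 < t₀ := by positivity
  set U := 2 * t₀ * deriv ℓ K / deriv ℓ 0
  have hU : 0 < U := by positivity
  set v₀ := K * (U * P.real {ω | U < φ ω})
  have hv₀ : 0 < v₀ :=
    mul_pos hK (mul_pos hU (ENNReal.toReal_pos (hφunb U).ne' (measure_ne_top _ _)))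
  refine ⟨v₀ / 2, by positivity, fun v _ hvε X β y c hSol hForm => ?_⟩
  by_contra hβ
  have hβ0 : 0 < β := lt_of_le_of_ne hForm.1 (Ne.symm hβ)
  have hX := hForm.ae_bounds hI hsm hc hℓ'pos hq0
  have hbind := hSol.integral_mul_eq hlam.1 hlam.2.le hℓc hℓd hℓmono.monotone hℓ0 hφint hφ1
    (lt_min hβ0 hK) (hX.mono fun _ h => h.1)
  by_cases hfloor : β < K ∧ 2 * t₀ < y
  · exact hSol.false_of_flat_floor hlam0 hlam.2.le hℓc hℓd hℓmono.monotone hφm hφint hφ0 hφ1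
      hFmono hβ0 hfloor.1 (t := y / 2) (by linarith)
      ((div_lt_iff₀ (by positivity)).1 (by linarith)) (by linarith)
      (hX.mono fun _ h hφy => min_eq_left hfloor.1.le ▸ h.2.1 hφy)
  have hXU : ∀ᵐ ω ∂P, U < φ ω → K ≤ X ω := by
    rcases not_and_or.1 hfloor with hKβ | hy
    · exact hX.mono fun _ h _ => min_eq_right (not_lt.1 hKβ) ▸ h.1
    · exact (hForm.ae_eq_of_lt hI hsm hc hℓ'pos hq0 (not_lt.1 hy)).mono fun _ h hω => (h hω).ge
  have := mul_mul_measureReal_le_integral_mul hφm hφint hφ0 (hSol.1.2.1.mono fun _ h => h.1)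
    (hSol.1.integrable_mul hφint) hK.le hXU
  linarith

/-- Lemma 3.3: for every `λ ∈ (0,1)` there exists `ε > 0` such that for
all capital levels `v ∈ (0, ε]`, the constant `β` in the representation of the unique
solution of the Neyman–Pearson problem for `ρ_λ` at level `v` equals `0`. -/
theorem rhoLam_beta_zero_for_small_levels
    {Ω : Type*} [MeasurableSpace Ω] (P : Measure Ω) [IsProbabilityMeasure P]
    (hP : Atomless P)
    (φ : Ω → ℝ) (hφm : Measurable φ) (hφint : Integrable φ P)
    (hφpos : ∀ᵐ ω ∂P, 0 < φ ω) (hφ1 : ∫ ω, φ ω ∂P = 1)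
    (hφunb : ∀ M : ℝ, 0 < P {ω | M < φ ω})
    (hFcont : ContinuousOn (fun x : ℝ => (P {ω | φ ω ≤ x}).toReal) (Ioi 0))
    (hFmono : StrictMonoOn (fun x : ℝ => (P {ω | φ ω ≤ x}).toReal) (Ioi 0))
    (K : ℝ) (hK : 0 < K) (lam : ℝ) (hlam : lam ∈ Ioo (0:ℝ) 1)
    (ℓ : ℝ → ℝ) (hℓconv : StrictConvexOn ℝ univ ℓ) (hℓmono : StrictMono ℓ)
    (hℓC1 : ContDiff ℝ 1 ℓ) (hℓ'pos : ∀ x : ℝ, 0 < deriv ℓ x)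
    (I : ℝ → EReal) (hI : IsExtendedInverse ℓ I)
    (q : ℝ) (hq : (P {ω | φ ω < q}).toReal ≤ 1 - lam ∧
      1 - lam ≤ (P {ω | φ ω ≤ q}).toReal) :
    ∃ ε : ℝ, 0 < ε ∧ ∀ v : ℝ, 0 < v → v ≤ ε →
      ∀ X : Ω → ℝ, ∀ β y c : ℝ,
        IsLamSolution P lam ℓ φ K v X → LamForm P φ ℓ I K q X β y c → β = 0 :=
  rhoLam_beta_zero_for_small_levels_general P φ hφm hφint hφpos hφ1 hφunb hFmono K hK lam hlam ℓ
    hℓconv hℓmono hℓC1 hℓ'pos I hI q hq
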